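/- Let n ≥ 4 be even. The six origamis O₁ = ((n-1,n),(1,2,…,n-1)), O₂ = ((1,2,…,n),(1,n-1,n-3,…,3,n,n-2,…,2)), O₃ = ((1,2,…,n),(n-1,n)), O₄ = ((1,2,…,n),(2,3,…,n)), O₅ = ((1,2,…,n),(2,n,n-1,…,3)), O₆ = ((2,3,…,n),(1,2,n,n-1,…,3)) are pairwise inequivalent: no two distinct members of this list are related by simultaneous conjugation. -/

import Mathlib

open Equiv

/-- The permutation of `Fin n` given by 1-based cycle notation `(a1, ..., ak)`:
each listed square `a` (an element of `{1, ..., n}`) corresponds to `a - 1 : Fin n`,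
and the cycle sends each listed element to the next one, the last back to the first. -/
def cyc (n : ℕ) (l : List ℕ) : Equiv.Perm (Fin n) :=
  (l.filterMap fun a => if h : a - 1 < n then some (⟨a - 1, h⟩ : Fin n) else none).formPerm

/-- Equivalence of origami pairs by simultaneous conjugation. -/
def OrigamiEquiv {n : ℕ} (p q : Equiv.Perm (Fin n) × Equiv.Perm (Fin n)) : Prop :=
  ∃ g : Equiv.Perm (Fin n), g * p.1 * g⁻¹ = q.1 ∧ g * p.2 * g⁻¹ = q.2

/-- The action of `T`: `T(h,v) = (h, v h⁻¹)`. -/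
def Tact {n : ℕ} (p : Equiv.Perm (Fin n) × Equiv.Perm (Fin n)) :
    Equiv.Perm (Fin n) × Equiv.Perm (Fin n) := (p.1, p.2 * p.1⁻¹)

/-- The action of `T⁻¹`: `T⁻¹(h,v) = (h, v h)`. -/
def TinvAct {n : ℕ} (p : Equiv.Perm (Fin n) × Equiv.Perm (Fin n)) :
    Equiv.Perm (Fin n) × Equiv.Perm (Fin n) := (p.1, p.2 * p.1)

/-- The action of `S`: `S(h,v) = (h v⁻¹, v)`. -/
def Sact {n : ℕ} (p : Equiv.Perm (Fin n) × Equiv.Perm (Fin n)) :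
    Equiv.Perm (Fin n) × Equiv.Perm (Fin n) := (p.1 * p.2⁻¹, p.2)

/-- The action of `S⁻¹`: `S⁻¹(h,v) = (h v, v)`. -/
def SinvAct {n : ℕ} (p : Equiv.Perm (Fin n) × Equiv.Perm (Fin n)) :
    Equiv.Perm (Fin n) × Equiv.Perm (Fin n) := (p.1 * p.2, p.2)

/-- `O₁ = ((n-1,n), (1,2,...,n-1))` -/
def OE1 (n : ℕ) : Equiv.Perm (Fin n) × Equiv.Perm (Fin n) :=
  (cyc n [n - 1, n], cyc n (List.range' 1 (n - 1)))

/-- `O₂ = ((1,2,...,n), (1, n-1, n-3, ..., 3, n, n-2, ..., 2))` for even `n` -/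
def OE2 (n : ℕ) : Equiv.Perm (Fin n) × Equiv.Perm (Fin n) :=
  (cyc n (List.range' 1 n),
   cyc n (1 :: ((List.range' 3 ((n - 2) / 2) 2).reverse ++
     n :: (List.range' 2 ((n - 2) / 2) 2).reverse)))

/-- `O₃ = ((1,2,...,n), (n-1,n))` -/
def OE3 (n : ℕ) : Equiv.Perm (Fin n) × Equiv.Perm (Fin n) :=
  (cyc n (List.range' 1 n), cyc n [n - 1, n])

/-- `O₄ = ((1,2,...,n), (2,3,...,n))` -/
def OE4 (n : ℕ) : Equiv.Perm (Fin n) × Equiv.Perm (Fin n) :=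
  (cyc n (List.range' 1 n), cyc n (List.range' 2 (n - 1)))

/-- `O₅ = ((1,2,...,n), (2, n, n-1, ..., 3))` -/
def OE5 (n : ℕ) : Equiv.Perm (Fin n) × Equiv.Perm (Fin n) :=
  (cyc n (List.range' 1 n), cyc n (2 :: (List.range' 3 (n - 2)).reverse))

/-- `O₆ = ((2,3,...,n), (1, 2, n, n-1, ..., 3))` -/
def OE6 (n : ℕ) : Equiv.Perm (Fin n) × Equiv.Perm (Fin n) :=
  (cyc n (List.range' 2 (n - 1)), cyc n (1 :: 2 :: (List.range' 3 (n - 2)).reverse))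

namespace Origami12

open List Equiv Equiv.Perm

variable {n : ℕ}

def pfin (n : ℕ) (a : ℕ) (h : 1 ≤ a ∧ a ≤ n) : Fin n := ⟨a - 1, by omega⟩

def toFin (n : ℕ) (l : List ℕ) : List (Fin n) :=
  l.filterMap fun a => if h : a - 1 < n then some (⟨a - 1, h⟩ : Fin n) else none

lemma cyc_eq (n : ℕ) (l : List ℕ) : cyc n l = (toFin n l).formPerm := rfl

lemma toFin_cons (a : ℕ) (l : List ℕ) (h : a - 1 < n) :
    toFin n (a :: l) = ⟨a - 1, h⟩ :: toFin n l := by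
  simp [toFin, List.filterMap_cons, dif_pos h]

lemma toFin_reverse (l : List ℕ) : toFin n l.reverse = (toFin n l).reverse :=
  List.filterMap_reverse

lemma toFin_eq_pmap : ∀ (l : List ℕ) (H : ∀ a ∈ l, 1 ≤ a ∧ a ≤ n),
    toFin n l = l.pmap (pfin n) H
  | [], _ => rfl
  | a :: l, H => by
    rw [List.pmap, toFin_cons a l (by have := H a List.mem_cons_self; omega),
      toFin_eq_pmap l fun b hb => H b (List.mem_cons_of_mem _ hb)]
    rfl

lemma length_toFin (l : List ℕ) (H : ∀ a ∈ l, 1 ≤ a ∧ a ≤ n) :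
    (toFin n l).length = l.length := by
  rw [toFin_eq_pmap l H, List.length_pmap]

lemma getElem_toFin (l : List ℕ) (H : ∀ a ∈ l, 1 ≤ a ∧ a ≤ n) (i : ℕ)
    (hi : i < (toFin n l).length) (hi' : i < l.length) (hx : l[i] - 1 < n) :
    (toFin n l)[i] = ⟨l[i] - 1, hx⟩ := by
  simp only [toFin_eq_pmap l H, List.getElem_pmap]
  rfl

lemma mem_toFin {x : Fin n} {l : List ℕ} (H : ∀ a ∈ l, 1 ≤ a ∧ a ≤ n) :
    x ∈ toFin n l ↔ ∃ a ∈ l, a - 1 = x.val := by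
  rw [toFin_eq_pmap l H]
  simp only [List.mem_pmap, pfin, Fin.ext_iff]
  constructor
  · rintro ⟨a, ha, h⟩; exact ⟨a, ha, h⟩
  · rintro ⟨a, ha, h⟩; exact ⟨a, ha, h⟩

lemma nodup_toFin {l : List ℕ} (H : ∀ a ∈ l, 1 ≤ a ∧ a ≤ n) (hl : l.Nodup) :
    (toFin n l).Nodup := by
  rw [toFin_eq_pmap l H]
  refine hl.pmap ?_
  intro a ha b hb hab
  have : a - 1 = b - 1 := congrArg Fin.val hab
  omega

lemma cycleType_cyc (l : List ℕ) (H : ∀ a ∈ l, 1 ≤ a ∧ a ≤ n) (hl : l.Nodup)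
    (h2 : 2 ≤ l.length) : (cyc n l).cycleType = {l.length} := by
  have hnd : (toFin n l).Nodup := nodup_toFin H hl
  have hlen : (toFin n l).length = l.length := length_toFin l H
  have hc : (toFin n l).formPerm.IsCycle := List.isCycle_formPerm hnd (by omega)
  rw [cyc_eq, hc.cycleType, List.support_formPerm_of_nodup _ hnd ?hx,
    List.toFinset_card_of_nodup hnd, hlen]
  case hx =>
    intro x hx
    apply_fun List.length at hx
    simp only [hlen, List.length_cons, List.length_nil] at hx
    omega


lemma r1 (hn : 4 ≤ n) : List.range' 1 n = 1 :: List.range' 2 (n - 1) := by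
  conv_lhs => rw [show n = (n - 1) + 1 by omega]
  rw [List.range'_succ]

lemma r2 (hn : 4 ≤ n) : List.range' 2 (n - 1) = 2 :: List.range' 3 (n - 2) := by
  conv_lhs => rw [show n - 1 = (n - 2) + 1 by omega]
  rw [List.range'_succ]

lemma ct_pair (hn : 4 ≤ n) : (cyc n [n - 1, n]).cycleType = {2} := by
  have h := cycleType_cyc (n := n) [n - 1, n]
    (by intro a ha; simp only [List.mem_cons, List.not_mem_nil, or_false] at ha; omega)
    (by simp only [List.nodup_cons, List.mem_cons, List.not_mem_nil, or_false,
          List.nodup_nil, and_true, List.not_mem_nil, not_false_iff]; omega)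
    (by simp)
  simpa using h

lemma ct_range' (s m : ℕ) (hs : 1 ≤ s) (hm : s + m - 1 ≤ n) (h2 : 2 ≤ m) :
    (cyc n (List.range' s m)).cycleType = {m} := by
  have h := cycleType_cyc (n := n) (List.range' s m)
    (by intro a ha; rw [List.mem_range'] at ha; obtain ⟨i, hi, rfl⟩ := ha; omega)
    (List.nodup_range')
    (by rw [List.length_range']; omega)
  rwa [List.length_range'] at h

lemma ct_O2v (hn : 4 ≤ n) (hne : Even n) :
    (cyc n (1 :: ((List.range' 3 ((n - 2) / 2) 2).reverse ++
      n :: (List.range' 2 ((n - 2) / 2) 2).reverse))).cycleType = {n} := by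
  obtain ⟨k, hk⟩ := hne
  have h := cycleType_cyc (n := n)
    (1 :: ((List.range' 3 ((n - 2) / 2) 2).reverse ++
      n :: (List.range' 2 ((n - 2) / 2) 2).reverse))
    ?_ ?_ ?_
  · rw [List.length_cons, List.length_append, List.length_reverse, List.length_cons,
      List.length_reverse, List.length_range', List.length_range'] at h
    rwa [show (n-2)/2 + ((n-2)/2 + 1) + 1 = n by omega] at h
  · intro a ha
    simp only [List.mem_cons, List.mem_append, List.mem_reverse, List.mem_range'] at ha
    rcases ha with rfl | (⟨i, hi, rfl⟩ | rfl | ⟨i, hi, rfl⟩) <;> omega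
  · simp only [List.nodup_cons, List.mem_append, List.mem_reverse, List.mem_cons,
      List.mem_range', List.nodup_append, List.nodup_reverse, List.Disjoint]
    refine ⟨?_, List.nodup_range' 2 (by norm_num), ⟨?_, List.nodup_range' 2 (by norm_num)⟩, ?_⟩
    · rintro (⟨i, hi, h⟩ | h | ⟨i, hi, h⟩) <;> omega
    · rintro ⟨i, hi, h⟩; omega
    · intro a h1 h2
      obtain ⟨i, hi, rfl⟩ := h1
      rcases h2 with h | ⟨j, hj, h⟩ <;> omega
  · rw [List.length_cons, List.length_append, List.length_reverse, List.length_cons,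
      List.length_reverse, List.length_range', List.length_range']
    omega

lemma ct_O5v (hn : 4 ≤ n) :
    (cyc n (2 :: (List.range' 3 (n - 2)).reverse)).cycleType = {n - 1} := by
  have h := cycleType_cyc (n := n) (2 :: (List.range' 3 (n - 2)).reverse) ?_ ?_ ?_
  · rwa [List.length_cons, List.length_reverse, List.length_range',
      show n - 2 + 1 = n - 1 by omega] at h
  · intro a ha
    simp only [List.mem_cons, List.mem_reverse, List.mem_range'] at ha
    rcases ha with rfl | ⟨i, hi, rfl⟩ <;> omega
  · simp only [List.nodup_cons, List.mem_reverse, List.mem_range', List.nodup_reverse]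
    refine ⟨?_, List.nodup_range'⟩
    rintro ⟨i, hi, h⟩; omega
  · rw [List.length_cons, List.length_reverse, List.length_range']; omega

lemma ct_O6v (hn : 4 ≤ n) :
    (cyc n (1 :: 2 :: (List.range' 3 (n - 2)).reverse)).cycleType = {n} := by
  have h := cycleType_cyc (n := n) (1 :: 2 :: (List.range' 3 (n - 2)).reverse) ?_ ?_ ?_
  · rwa [List.length_cons, List.length_cons, List.length_reverse, List.length_range',
      show n - 2 + 1 + 1 = n by omega] at h
  · intro a ha
    simp only [List.mem_cons, List.mem_reverse, List.mem_range'] at ha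
    rcases ha with rfl | rfl | ⟨i, hi, rfl⟩ <;> omega
  · simp only [List.nodup_cons, List.mem_cons, List.mem_reverse, List.mem_range',
      List.nodup_reverse]
    refine ⟨?_, ?_, List.nodup_range'⟩
    · rintro (h | ⟨i, hi, h⟩) <;> omega
    · rintro ⟨i, hi, h⟩; omega
  · rw [List.length_cons, List.length_cons, List.length_reverse, List.length_range']; omega


lemma getElem_toFin_val (l : List ℕ) (H : ∀ a ∈ l, 1 ≤ a ∧ a ≤ n) (i : ℕ)
    (hi : i < (toFin n l).length) (hi' : i < l.length) :
    ((toFin n l)[i]).val = l[i] - 1 := by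
  simp only [toFin_eq_pmap l H, List.getElem_pmap]
  rfl

lemma cyc_apply (l : List ℕ) (H : ∀ a ∈ l, 1 ≤ a ∧ a ≤ n) (hl : l.Nodup) (i : ℕ)
    (hi : i < l.length) (hj : (i + 1) % l.length < l.length) (x y : Fin n)
    (hx : x.val = l[i] - 1)
    (hy : y.val = l[(i + 1) % l.length]'hj - 1) :
    cyc n l x = y := by
  have hnd := nodup_toFin H hl
  have hlen := length_toFin l H
  have h1 : (toFin n l)[i]'(by omega) = x :=
    Fin.ext (by rw [getElem_toFin_val l H i (by omega) hi, hx])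
  rw [cyc_eq, ← h1, List.formPerm_apply_getElem _ hnd i]
  refine Fin.ext ?_
  rw [getElem_toFin_val l H _ _ (by rw [hlen]; exact Nat.mod_lt _ (by omega)), hy]
  simp only [hlen]

lemma H1' (hn : 4 ≤ n) : ∀ a ∈ List.range' 1 n, 1 ≤ a ∧ a ≤ n := by
  intro a ha; rw [List.mem_range'] at ha; obtain ⟨i, hi, rfl⟩ := ha; omega

lemma H2' (hn : 4 ≤ n) : ∀ a ∈ List.range' 2 (n - 1), 1 ≤ a ∧ a ≤ n := by
  intro a ha; rw [List.mem_range'] at ha; obtain ⟨i, hi, rfl⟩ := ha; omega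

lemma e4 (hn : 4 ≤ n) :
    toFin n (List.range' 2 (n - 1)) =
      ⟨1, by omega⟩ :: toFin n (List.range' 3 (n - 2)) := by
  rw [r2 hn, toFin_cons 2 _ (by omega)]

lemma eh (hn : 4 ≤ n) :
    toFin n (List.range' 1 n) =
      ⟨0, by omega⟩ :: ⟨1, by omega⟩ :: toFin n (List.range' 3 (n - 2)) := by
  rw [r1 hn, toFin_cons 1 _ (by omega), e4 hn]

lemma key4 (hn : 4 ≤ n) :
    cyc n (List.range' 1 n) =
      Equiv.swap (⟨0, by omega⟩ : Fin n) ⟨1, by omega⟩ * cyc n (List.range' 2 (n - 1)) := by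
  rw [cyc_eq, cyc_eq, eh hn, e4 hn, List.formPerm_cons_cons]

lemma nd4 (hn : 4 ≤ n) : (toFin n (List.range' 2 (n - 1))).Nodup :=
  nodup_toFin (H2' hn) (List.nodup_range')

lemma key5 (hn : 4 ≤ n) :
    cyc n (2 :: (List.range' 3 (n - 2)).reverse) = (cyc n (List.range' 2 (n - 1)))⁻¹ := by
  rw [cyc_eq, cyc_eq, toFin_cons 2 _ (by omega), toFin_reverse, ← List.formPerm_reverse,
    e4 hn, List.reverse_cons]
  have hnd' : ((toFin n (List.range' 3 (n - 2))).reverse ++ [(⟨1, by omega⟩ : Fin n)]).Nodup := by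
    rw [← List.reverse_cons, List.nodup_reverse, ← e4 hn]
    exact nd4 hn
  have hrot : ((⟨2 - 1, by omega⟩ : Fin n) :: (toFin n (List.range' 3 (n - 2))).reverse) =
      ((toFin n (List.range' 3 (n - 2))).reverse ++ [(⟨1, by omega⟩ : Fin n)]).rotate
        (toFin n (List.range' 3 (n - 2))).reverse.length := by
    rw [List.rotate_append_length_eq]
    rfl
  rw [hrot, List.formPerm_rotate _ hnd']

lemma ev_h0 (hn : 4 ≤ n) : cyc n (List.range' 1 n) ⟨0, by omega⟩ = ⟨1, by omega⟩ := by
  refine cyc_apply _ (H1' hn) (List.nodup_range') 0 (by rw [List.length_range']; omega)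
    (by rw [List.length_range']; apply Nat.mod_lt; omega) _ _
    (by simp [List.getElem_range']) ?_
  simp only [List.length_range', List.getElem_range']
  rw [Nat.mod_eq_of_lt (by omega)]

lemma ev_h2 (hn : 4 ≤ n) : cyc n (List.range' 1 n) ⟨2, by omega⟩ = ⟨3, by omega⟩ := by
  refine cyc_apply _ (H1' hn) (List.nodup_range') 2 (by rw [List.length_range']; omega)
    (by rw [List.length_range']; apply Nat.mod_lt; omega) _ _
    (by simp [List.getElem_range']) ?_
  simp only [List.length_range', List.getElem_range']
  rw [Nat.mod_eq_of_lt (by omega)]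

lemma ev_v0 (hn : 4 ≤ n) : cyc n (List.range' 2 (n - 1)) ⟨0, by omega⟩ = ⟨0, by omega⟩ := by
  rw [cyc_eq]
  apply List.formPerm_apply_of_notMem
  rw [mem_toFin (H2' hn)]
  rintro ⟨a, ha, hax⟩
  rw [List.mem_range'] at ha
  obtain ⟨i, hi, rfl⟩ := ha
  simp only at hax
  omega

lemma ev_v1 (hn : 4 ≤ n) : cyc n (List.range' 2 (n - 1)) ⟨1, by omega⟩ = ⟨2, by omega⟩ := by
  refine cyc_apply _ (H2' hn) (List.nodup_range') 0 (by rw [List.length_range']; omega)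
    (by rw [List.length_range']; apply Nat.mod_lt; omega) _ _
    (by simp [List.getElem_range']) ?_
  simp only [List.length_range', List.getElem_range']
  rw [Nat.mod_eq_of_lt (by omega)]

lemma sq4 (hn : 4 ≤ n) :
    ((cyc n (List.range' 1 n)) * (cyc n (List.range' 2 (n - 1)))⁻¹) ^ 2 = 1 := by
  rw [key4 hn, mul_inv_cancel_right, sq, Equiv.swap_mul_self]

lemma sq5 (hn : 4 ≤ n) :
    ¬((cyc n (List.range' 1 n)) * (cyc n (2 :: (List.range' 3 (n - 2)).reverse))⁻¹) ^ 2 = 1 := by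
  rw [key5 hn, inv_inv]
  intro hcon
  have h0 := congrArg (fun σ : Equiv.Perm (Fin n) => σ ⟨0, by omega⟩) hcon
  simp only [sq, Equiv.Perm.mul_apply, Equiv.Perm.one_apply] at h0
  rw [ev_v0 hn, ev_h0 hn, ev_v1 hn, ev_h2 hn] at h0
  have := congrArg Fin.val h0
  simp only at this
  omega

lemma not_equiv_of_fst {p q : Equiv.Perm (Fin n) × Equiv.Perm (Fin n)}
    (h : p.1.cycleType ≠ q.1.cycleType) : ¬ OrigamiEquiv p q := by
  rintro ⟨g, h1, h2⟩
  apply h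
  rw [← h1, Equiv.Perm.cycleType_conj]

lemma not_equiv_of_snd {p q : Equiv.Perm (Fin n) × Equiv.Perm (Fin n)}
    (h : p.2.cycleType ≠ q.2.cycleType) : ¬ OrigamiEquiv p q := by
  rintro ⟨g, h1, h2⟩
  apply h
  rw [← h2, Equiv.Perm.cycleType_conj]

lemma not_equiv_of_sq {p q : Equiv.Perm (Fin n) × Equiv.Perm (Fin n)}
    (hp : (p.1 * p.2⁻¹) ^ 2 = 1) (hq : ¬(q.1 * q.2⁻¹) ^ 2 = 1) : ¬ OrigamiEquiv p q := by
  rintro ⟨g, h1, h2⟩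
  apply hq
  rw [← h1, ← h2]
  have e1 : g * p.1 * g⁻¹ * (g * p.2 * g⁻¹)⁻¹ = g * (p.1 * p.2⁻¹) * g⁻¹ := by group
  have e2 : (g * (p.1 * p.2⁻¹) * g⁻¹) ^ 2 = g * (p.1 * p.2⁻¹) ^ 2 * g⁻¹ := by
    rw [sq, sq]
    simp [mul_assoc]
  rw [e1, e2, hp, mul_one, mul_inv_cancel]

end Origami12

open List in
theorem stmt12 (n : ℕ) (hn : 4 ≤ n) (hne : Even n) :
    List.Pairwise (fun p q => ¬ OrigamiEquiv p q)
      [OE1 n, OE2 n, OE3 n, OE4 n, OE5 n, OE6 n] := by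
  have c1h : ((OE1 n).1).cycleType = {2} := Origami12.ct_pair hn
  have c1v : ((OE1 n).2).cycleType = {n - 1} := Origami12.ct_range' 1 (n - 1) (by omega) (by omega) (by omega)
  have chn : (cyc n (List.range' 1 n)).cycleType = {n} := Origami12.ct_range' 1 n (by omega) (by omega) (by omega)
  have c2h : ((OE2 n).1).cycleType = {n} := chn
  have c2v : ((OE2 n).2).cycleType = {n} := Origami12.ct_O2v hn hne
  have c3h : ((OE3 n).1).cycleType = {n} := chn
  have c3v : ((OE3 n).2).cycleType = {2} := Origami12.ct_pair hn
  have c4h : ((OE4 n).1).cycleType = {n} := chn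
  have c4v : ((OE4 n).2).cycleType = {n - 1} := Origami12.ct_range' 2 (n - 1) (by omega) (by omega) (by omega)
  have c5h : ((OE5 n).1).cycleType = {n} := chn
  have c5v : ((OE5 n).2).cycleType = {n - 1} := Origami12.ct_O5v hn
  have c6h : ((OE6 n).1).cycleType = {n - 1} := Origami12.ct_range' 2 (n - 1) (by omega) (by omega) (by omega)
  have c6v : ((OE6 n).2).cycleType = {n} := Origami12.ct_O6v hn
  have hs4 : (((OE4 n).1) * ((OE4 n).2)⁻¹) ^ 2 = 1 := Origami12.sq4 hn
  have hs5 : ¬(((OE5 n).1) * ((OE5 n).2)⁻¹) ^ 2 = 1 := Origami12.sq5 hn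
  refine List.Pairwise.cons ?_ (List.Pairwise.cons ?_ (List.Pairwise.cons ?_
    (List.Pairwise.cons ?_ (List.Pairwise.cons ?_ (List.Pairwise.cons ?_ List.Pairwise.nil)))))
  · intro q hq
    simp only [List.mem_cons, List.not_mem_nil, or_false] at hq
    rcases hq with rfl | rfl | rfl | rfl | rfl
    · exact Origami12.not_equiv_of_fst (by rw [c1h, c2h]; simp only [Ne, Multiset.singleton_inj]; omega)
    · exact Origami12.not_equiv_of_fst (by rw [c1h, c3h]; simp only [Ne, Multiset.singleton_inj]; omega)
    · exact Origami12.not_equiv_of_fst (by rw [c1h, c4h]; simp only [Ne, Multiset.singleton_inj]; omega)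
    · exact Origami12.not_equiv_of_fst (by rw [c1h, c5h]; simp only [Ne, Multiset.singleton_inj]; omega)
    · exact Origami12.not_equiv_of_fst (by rw [c1h, c6h]; simp only [Ne, Multiset.singleton_inj]; omega)
  · intro q hq
    simp only [List.mem_cons, List.not_mem_nil, or_false] at hq
    rcases hq with rfl | rfl | rfl | rfl
    · exact Origami12.not_equiv_of_snd (by rw [c2v, c3v]; simp only [Ne, Multiset.singleton_inj]; omega)
    · exact Origami12.not_equiv_of_snd (by rw [c2v, c4v]; simp only [Ne, Multiset.singleton_inj]; omega)
    · exact Origami12.not_equiv_of_snd (by rw [c2v, c5v]; simp only [Ne, Multiset.singleton_inj]; omega)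
    · exact Origami12.not_equiv_of_fst (by rw [c2h, c6h]; simp only [Ne, Multiset.singleton_inj]; omega)
  · intro q hq
    simp only [List.mem_cons, List.not_mem_nil, or_false] at hq
    rcases hq with rfl | rfl | rfl
    · exact Origami12.not_equiv_of_snd (by rw [c3v, c4v]; simp only [Ne, Multiset.singleton_inj]; omega)
    · exact Origami12.not_equiv_of_snd (by rw [c3v, c5v]; simp only [Ne, Multiset.singleton_inj]; omega)
    · exact Origami12.not_equiv_of_fst (by rw [c3h, c6h]; simp only [Ne, Multiset.singleton_inj]; omega)
  · intro q hq
    simp only [List.mem_cons, List.not_mem_nil, or_false] at hq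
    rcases hq with rfl | rfl
    · exact Origami12.not_equiv_of_sq hs4 hs5
    · exact Origami12.not_equiv_of_fst (by rw [c4h, c6h]; simp only [Ne, Multiset.singleton_inj]; omega)
  · intro q hq
    simp only [List.mem_cons, List.not_mem_nil, or_false] at hq
    rcases hq with rfl
    exact Origami12.not_equiv_of_fst (by rw [c5h, c6h]; simp only [Ne, Multiset.singleton_inj]; omega)
  · intro q hq
    exact absurd hq List.not_mem_nil
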